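/- Let n ≥ 2, i ∈ {1,…,n} and j ∈ {2,…,n}. Then the set {σ ∈ Alt_{n+1} : σ(j) = i and (σ(0) = 0 or σ(1) = 0)} is a worst-case efficient dominating set of the subdigraph of ST⃗_{n+1} induced on V_{i,j} = {σ ∈ Alt_{n+1} : σ(j) = i}. Moreover, for each fixed j ∈ {2,…,n}, the n sets {σ ∈ Alt_{n+1} : σ(j) = i and (σ(0) = 0 or σ(1) = 0)}, for i = 1,…,n, form a partition of S_0 = {σ ∈ Alt_{n+1} : σ(0) = 0 or σ(1) = 0}. -/

import Mathlib

/-- The 3-cycle `gᵢ` determined by `gᵢ 0 = i`, `gᵢ i = 1`, `gᵢ 1 = 0`. -/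
def gcyc {m : ℕ} [NeZero m] (i : Fin m) : Equiv.Perm (Fin m) :=
  Equiv.swap 1 i * Equiv.swap 0 1

/-- Vertices of the star digraph `ST⃗_m`: the even permutations of `{0, …, m-1}`. -/
abbrev StarVertex (m : ℕ) := {σ : Equiv.Perm (Fin m) // σ ∈ alternatingGroup (Fin m)}

/-- The arc relation of the star digraph `ST⃗_m`: there is an arc from `σ` to `σ ∘ gᵢ`
for each `i ∈ {2, …, m-1}`. -/
def starArc {m : ℕ} [NeZero m] (σ τ : StarVertex m) : Prop :=
  ∃ i : Fin m, 2 ≤ i.val ∧ (τ : Equiv.Perm (Fin m)) = (σ : Equiv.Perm (Fin m)) * gcyc i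

/-- A set `S` of vertices is ±stable for the arc relation `A` if every vertex of the
subdigraph induced by `S` has in-degree `0` or out-degree `0` there. -/
def IsPMStable {V : Type*} (A : V → V → Prop) (S : Set V) : Prop :=
  ∀ v ∈ S, (∀ u ∈ S, ¬ A u v) ∨ (∀ u ∈ S, ¬ A v u)

/-- A set `S` of vertices is perfect ±dominating for the arc relation `A` if every vertex
outside `S` has exactly one in-neighbor in `S` and exactly one out-neighbor in `S`. -/
def IsPerfectPMDominating {V : Type*} (A : V → V → Prop) (S : Set V) : Prop :=
  ∀ v, v ∉ S → (∃! u, u ∈ S ∧ A u v) ∧ (∃! w, w ∈ S ∧ A v w)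

/-- A worst-case efficient dominating set: perfect ±dominating and ±stable. -/
def IsWCEDS {V : Type*} (A : V → V → Prop) (S : Set V) : Prop :=
  IsPerfectPMDominating A S ∧ IsPMStable A S

/-- The set `S_i = {σ ∈ Alt_m : σ 0 = i or σ 1 = i}`. -/
def Sset (m : ℕ) [NeZero m] (i : Fin m) : Set (StarVertex m) :=
  {σ | (σ : Equiv.Perm (Fin m)) 0 = i ∨ (σ : Equiv.Perm (Fin m)) 1 = i}

/-- The set `V_{i,j} = {σ ∈ Alt_m : σ j = i}`. -/
def Vset (m : ℕ) (i j : Fin m) : Set (StarVertex m) :=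
  {σ | (σ : Equiv.Perm (Fin m)) j = i}

/-!
The arc `σ → σ ∘ g_k` moves the values of `σ` at `0, 1, k` cyclically and keeps all the
others. If `σ` takes neither `0` nor `1` to `0`, an arc between `σ` and `S_0` therefore has to
use `k = σ⁻¹ 0`, which gives exactly one in- and one out-neighbor in `S_0`; and the arcs
between two members of `S_0` would have to put the value `0` at two places at once, so `S_0` is
±stable. For `j ≥ 2` and `i ≠ 0`, a vertex of `V_{i,j}` has `σ⁻¹ 0 ≠ j`, so these arcs keep
`σ j = i` and `S_0 ∩ V_{i,j}` is a worst-case efficient dominating set of `V_{i,j}`.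
-/

section Restrict

variable {V : Type*} {A : V → V → Prop} {S : Set V}

theorem IsPMStable.restrict (hS : IsPMStable A S) (W : Set V) :
    IsPMStable (fun a b : W => A a b) {a | a.1 ∈ S} := by
  intro v hv
  exact (hS v hv).imp (fun h u hu => h u hu) (fun h u hu => h u hu)

theorem IsPerfectPMDominating.restrict (hS : IsPerfectPMDominating A S) {W : Set V}
    (hW : ∀ v ∈ W, v ∉ S → ∀ u ∈ S, (A u v → u ∈ W) ∧ (A v u → u ∈ W)) :
    IsPerfectPMDominating (fun a b : W => A a b) {a | a.1 ∈ S} := by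
  intro v hv
  obtain ⟨⟨u, ⟨hu, huv⟩, hu_uniq⟩, ⟨w, ⟨hw, hvw⟩, hw_uniq⟩⟩ := hS v hv
  exact ⟨⟨⟨u, (hW v v.2 hv u hu).1 huv⟩, ⟨hu, huv⟩,
      fun u' hu' => Subtype.ext (hu_uniq u' hu')⟩,
    ⟨⟨w, (hW v v.2 hv w hw).2 hvw⟩, ⟨hw, hvw⟩,
      fun w' hw' => Subtype.ext (hw_uniq w' hw')⟩⟩

theorem IsWCEDS.restrict (hS : IsWCEDS A S) {W : Set V}
    (hW : ∀ v ∈ W, v ∉ S → ∀ u ∈ S, (A u v → u ∈ W) ∧ (A v u → u ∈ W)) :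
    IsWCEDS (fun a b : W => A a b) {a | a.1 ∈ S} :=
  ⟨hS.1.restrict hW, hS.2.restrict W⟩

end Restrict

section StarDigraph

variable {m : ℕ} [NeZero m] {k x : Fin m}

theorem val_one_of_two_le_val (hk : 2 ≤ k.val) : ((1 : Fin m) : ℕ) = 1 := by
  rw [Fin.val_one', Nat.mod_eq_of_lt (by omega)]

theorem ne_zero_of_two_le_val (hk : 2 ≤ k.val) : k ≠ 0 := by
  rintro rfl
  simp at hk

theorem ne_one_of_two_le_val (hk : 2 ≤ k.val) : k ≠ 1 := by
  rintro rfl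
  have := val_one_of_two_le_val hk
  omega

theorem zero_ne_one_of_two_le_val (hk : 2 ≤ k.val) : (0 : Fin m) ≠ 1 := by
  intro h
  have h1 := val_one_of_two_le_val hk
  rw [← h] at h1
  simp at h1

theorem two_le_val_of_ne (h0 : x ≠ 0) (h1 : x ≠ 1) : 2 ≤ x.val := by
  rcases m with _ | _ | m
  · exact (NeZero.ne 0 rfl).elim
  · exact (h0 (Fin.eq_zero x)).elim
  · have : x.val ≠ 0 := fun h => h0 (Fin.ext h)
    have : x.val ≠ 1 := fun h => h1 (Fin.ext (by simp [h]))
    omega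

theorem gcyc_apply_zero (k : Fin m) : gcyc k 0 = k := by
  simp [gcyc, Equiv.Perm.mul_apply]

theorem gcyc_apply_one (hk : 2 ≤ k.val) : gcyc k 1 = 0 := by
  rw [gcyc, Equiv.Perm.mul_apply, Equiv.swap_apply_right,
    Equiv.swap_apply_of_ne_of_ne (zero_ne_one_of_two_le_val hk) (ne_zero_of_two_le_val hk).symm]

theorem gcyc_apply_self (hk : 2 ≤ k.val) : gcyc k k = 1 := by
  rw [gcyc, Equiv.Perm.mul_apply,
    Equiv.swap_apply_of_ne_of_ne (ne_zero_of_two_le_val hk) (ne_one_of_two_le_val hk),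
    Equiv.swap_apply_right]

theorem gcyc_apply_of_ne (h0 : x ≠ 0) (h1 : x ≠ 1) (hk : x ≠ k) : gcyc k x = x := by
  rw [gcyc, Equiv.Perm.mul_apply, Equiv.swap_apply_of_ne_of_ne h0 h1,
    Equiv.swap_apply_of_ne_of_ne h1 hk]

theorem gcyc_mem_alternatingGroup (hk : 2 ≤ k.val) : gcyc k ∈ alternatingGroup (Fin m) := by
  rw [Equiv.Perm.mem_alternatingGroup, gcyc, map_mul,
    Equiv.Perm.sign_swap (ne_one_of_two_le_val hk).symm,
    Equiv.Perm.sign_swap (zero_ne_one_of_two_le_val hk)]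
  decide

variable {σ τ : StarVertex m}

theorem apply_eq_zero_of_arc_from_Sset_zero (hk : 2 ≤ k.val)
    (h : (τ : Equiv.Perm (Fin m)) = σ * gcyc k) (hσ : σ ∈ Sset m 0)
    (hτ : (τ : Equiv.Perm (Fin m)) 1 ≠ 0) : (τ : Equiv.Perm (Fin m)) k = 0 := by
  rw [h, Equiv.Perm.mul_apply, gcyc_apply_one hk] at hτ
  rw [h, Equiv.Perm.mul_apply, gcyc_apply_self hk]
  exact hσ.resolve_left hτ

theorem apply_eq_zero_of_arc_to_Sset_zero (hk : 2 ≤ k.val)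
    (h : (τ : Equiv.Perm (Fin m)) = σ * gcyc k) (hτ : τ ∈ Sset m 0)
    (hσ : (σ : Equiv.Perm (Fin m)) 0 ≠ 0) : (σ : Equiv.Perm (Fin m)) k = 0 := by
  have hτ1 : (τ : Equiv.Perm (Fin m)) 1 ≠ 0 := by
    rwa [h, Equiv.Perm.mul_apply, gcyc_apply_one hk]
  have hτ0 := hτ.resolve_right hτ1
  rwa [h, Equiv.Perm.mul_apply, gcyc_apply_zero] at hτ0

theorem isPMStable_Sset_zero : IsPMStable starArc (Sset m 0) := by
  intro v hv
  have hv_inj := (v : Equiv.Perm (Fin m)).injective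
  rcases hv with hv0 | hv1
  · left
    rintro u hu ⟨k, hk, huv⟩
    have hv1_ne : (v : Equiv.Perm (Fin m)) 1 ≠ 0 := fun h =>
      zero_ne_one_of_two_le_val hk (hv_inj (hv0.trans h.symm))
    have hvk := apply_eq_zero_of_arc_from_Sset_zero hk huv hu hv1_ne
    exact ne_zero_of_two_le_val hk (hv_inj (hvk.trans hv0.symm))
  · right
    rintro w hw ⟨k, hk, hvw⟩
    have hv0_ne : (v : Equiv.Perm (Fin m)) 0 ≠ 0 := fun h =>
      zero_ne_one_of_two_le_val hk (hv_inj (h.trans hv1.symm))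
    have hvk := apply_eq_zero_of_arc_to_Sset_zero hk hvw hw hv0_ne
    exact ne_one_of_two_le_val hk (hv_inj (hvk.trans hv1.symm))

theorem isPerfectPMDominating_Sset_zero : IsPerfectPMDominating starArc (Sset m 0) := by
  intro v hv
  simp only [Sset, Set.mem_ofPred_eq, not_or] at hv
  obtain ⟨hv0, hv1⟩ := hv
  set k := (v : Equiv.Perm (Fin m))⁻¹ 0
  have hvk : (v : Equiv.Perm (Fin m)) k = 0 := Equiv.apply_symm_apply _ _
  have hk : 2 ≤ k.val := two_le_val_of_ne (fun h => hv0 (h ▸ hvk)) (fun h => hv1 (h ▸ hvk))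
  have hk_unique : ∀ k', (v : Equiv.Perm (Fin m)) k' = 0 → k' = k := fun k' h =>
    (v : Equiv.Perm (Fin m)).injective (h.trans hvk.symm)
  constructor
  · refine ⟨⟨v * (gcyc k)⁻¹, mul_mem v.2 (inv_mem (gcyc_mem_alternatingGroup hk))⟩,
      ⟨Or.inr ?_, k, hk, (inv_mul_cancel_right _ _).symm⟩, ?_⟩
    · change (v : Equiv.Perm (Fin m)) ((gcyc k)⁻¹ 1) = 0
      rw [Equiv.Perm.inv_eq_iff_eq.2 (gcyc_apply_self hk).symm, hvk]
    · rintro u ⟨hu, k', hk', hvu⟩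
      obtain rfl := hk_unique k' (apply_eq_zero_of_arc_from_Sset_zero hk' hvu hu hv1)
      exact Subtype.ext (eq_mul_inv_of_mul_eq hvu.symm)
  · refine ⟨⟨v * gcyc k, mul_mem v.2 (gcyc_mem_alternatingGroup hk)⟩,
      ⟨Or.inl ?_, k, hk, rfl⟩, ?_⟩
    · change (v : Equiv.Perm (Fin m)) (gcyc k 0) = 0
      rw [gcyc_apply_zero, hvk]
    · rintro w ⟨hw, k', hk', hvw⟩
      obtain rfl := hk_unique k' (apply_eq_zero_of_arc_to_Sset_zero hk' hvw hw hv0)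
      exact Subtype.ext hvw

theorem isWCEDS_Sset_zero : IsWCEDS starArc (Sset m 0) :=
  ⟨isPerfectPMDominating_Sset_zero, isPMStable_Sset_zero⟩

theorem mem_Vset_of_arc_Sset_zero {i j : Fin m} (hi : i ≠ 0) (hj : 2 ≤ j.val) :
    ∀ v ∈ Vset m i j, v ∉ Sset m 0 → ∀ u ∈ Sset m 0,
      (starArc u v → u ∈ Vset m i j) ∧ (starArc v u → u ∈ Vset m i j) := by
  intro v hv hvS u hu
  simp only [Sset, Set.mem_ofPred_eq, not_or] at hvS
  have hv_fix : ∀ k, (v : Equiv.Perm (Fin m)) k = 0 → gcyc k j = j := fun k hvk =>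
    gcyc_apply_of_ne (ne_zero_of_two_le_val hj) (ne_one_of_two_le_val hj)
      (fun hjk => hi (hv.symm.trans (hjk ▸ hvk)))
  constructor
  · rintro ⟨k, hk, huv⟩
    have hvj : (v : Equiv.Perm (Fin m)) j = i := hv
    rwa [huv, Equiv.Perm.mul_apply,
      hv_fix k (apply_eq_zero_of_arc_from_Sset_zero hk huv hu hvS.2)] at hvj
  · rintro ⟨k, hk, hvu⟩
    change (u : Equiv.Perm (Fin m)) j = i
    rw [hvu, Equiv.Perm.mul_apply, hv_fix k (apply_eq_zero_of_arc_to_Sset_zero hk hvu hu hvS.1)]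
    exact hv

theorem biUnion_inter_Sset_zero_eq {j : Fin m} (hj : 2 ≤ j.val) :
    (⋃ i' ∈ {i' : Fin m | 1 ≤ i'.val},
        {σ : StarVertex m | (σ : Equiv.Perm (Fin m)) j = i' ∧
          ((σ : Equiv.Perm (Fin m)) 0 = 0 ∨ (σ : Equiv.Perm (Fin m)) 1 = 0)})
      = Sset m 0 := by
  ext σ
  simp only [Set.mem_iUnion, Set.mem_ofPred_eq, Sset, exists_prop]
  refine ⟨fun ⟨_, _, _, hσ⟩ => hσ, fun hσ => ⟨_, ?_, rfl, hσ⟩⟩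
  have hσj : (σ : Equiv.Perm (Fin m)) j ≠ 0 := fun h => by
    rcases hσ with h0 | h1
    · exact ne_zero_of_two_le_val hj ((σ : Equiv.Perm (Fin m)).injective (h.trans h0.symm))
    · exact ne_one_of_two_le_val hj ((σ : Equiv.Perm (Fin m)).injective (h.trans h1.symm))
  exact Nat.one_le_iff_ne_zero.2 (Fin.val_ne_zero_iff.2 hσj)

end StarDigraph

theorem stmt12_general (n : ℕ) (i j : Fin (n + 1)) (hi : 1 ≤ i.val) (hj : 2 ≤ j.val) :
    IsWCEDS (fun a b : ↥(Vset (n + 1) i j) => starArc a.1 b.1)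
      {a : ↥(Vset (n + 1) i j) |
        (a.1 : Equiv.Perm (Fin (n + 1))) 0 = 0 ∨ (a.1 : Equiv.Perm (Fin (n + 1))) 1 = 0} ∧
    (⋃ i' ∈ {i' : Fin (n + 1) | 1 ≤ i'.val},
        {σ : StarVertex (n + 1) | (σ : Equiv.Perm (Fin (n + 1))) j = i' ∧
          ((σ : Equiv.Perm (Fin (n + 1))) 0 = 0 ∨ (σ : Equiv.Perm (Fin (n + 1))) 1 = 0)})
      = Sset (n + 1) 0 ∧
    (∀ i₁ i₂ : Fin (n + 1), 1 ≤ i₁.val → 1 ≤ i₂.val → i₁ ≠ i₂ →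
      Disjoint
        {σ : StarVertex (n + 1) | (σ : Equiv.Perm (Fin (n + 1))) j = i₁ ∧
          ((σ : Equiv.Perm (Fin (n + 1))) 0 = 0 ∨ (σ : Equiv.Perm (Fin (n + 1))) 1 = 0)}
        {σ : StarVertex (n + 1) | (σ : Equiv.Perm (Fin (n + 1))) j = i₂ ∧
          ((σ : Equiv.Perm (Fin (n + 1))) 0 = 0 ∨ (σ : Equiv.Perm (Fin (n + 1))) 1 = 0)}) := by
  have hi0 : i ≠ 0 := by
    rintro rfl
    simp at hi
  refine ⟨isWCEDS_Sset_zero.restrict (mem_Vset_of_arc_Sset_zero hi0 hj),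
    biUnion_inter_Sset_zero_eq hj, ?_⟩
  intro i₁ i₂ _ _ hne
  rw [Set.disjoint_left]
  rintro σ ⟨h₁, _⟩ ⟨h₂, _⟩
  exact hne (h₁ ▸ h₂)

/-- For `n ≥ 2`, `i ∈ {1, …, n}` and `j ∈ {2, …, n}`: the set
`{σ ∈ Alt_{n+1} : σ j = i and (σ 0 = 0 or σ 1 = 0)}` is a worst-case efficient dominating
set of the subdigraph of `ST⃗_{n+1}` induced on `V_{i,j}`; moreover, for fixed `j`, these
sets for `i = 1, …, n` partition `S_0`. -/
theorem stmt12 (n : ℕ) (hn : 2 ≤ n) (i j : Fin (n + 1)) (hi : 1 ≤ i.val) (hj : 2 ≤ j.val) :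
    IsWCEDS (fun a b : ↥(Vset (n + 1) i j) => starArc a.1 b.1)
      {a : ↥(Vset (n + 1) i j) |
        (a.1 : Equiv.Perm (Fin (n + 1))) 0 = 0 ∨ (a.1 : Equiv.Perm (Fin (n + 1))) 1 = 0} ∧
    (⋃ i' ∈ {i' : Fin (n + 1) | 1 ≤ i'.val},
        {σ : StarVertex (n + 1) | (σ : Equiv.Perm (Fin (n + 1))) j = i' ∧
          ((σ : Equiv.Perm (Fin (n + 1))) 0 = 0 ∨ (σ : Equiv.Perm (Fin (n + 1))) 1 = 0)})
      = Sset (n + 1) 0 ∧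
    (∀ i₁ i₂ : Fin (n + 1), 1 ≤ i₁.val → 1 ≤ i₂.val → i₁ ≠ i₂ →
      Disjoint
        {σ : StarVertex (n + 1) | (σ : Equiv.Perm (Fin (n + 1))) j = i₁ ∧
          ((σ : Equiv.Perm (Fin (n + 1))) 0 = 0 ∨ (σ : Equiv.Perm (Fin (n + 1))) 1 = 0)}
        {σ : StarVertex (n + 1) | (σ : Equiv.Perm (Fin (n + 1))) j = i₂ ∧
          ((σ : Equiv.Perm (Fin (n + 1))) 0 = 0 ∨ (σ : Equiv.Perm (Fin (n + 1))) 1 = 0)}) :=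
  stmt12_general n i j hi hj
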